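/- arXiv:1604.05533 — 6 statements merged into one kernel-verified Lean document; each statement's English description precedes it below -/
import Mathlib

section
/- Fix u ∈ ℂ and y ∈ ℂ with Re y > 0. The function z ↦ Φ(z,u,y) is complex differentiable on the open unit disc, and for every z with |z| < 1 one has Φ(z,u−1,y) = y·Φ(z,u,y) + z·(∂Φ/∂z)(z,u,y). -/
/-- The Lerch transcendent `Φ(z,u,y) = Σ_{n=0}^∞ z^n/(y+n)^u`,
with `(y+n)^u` the principal complex power. -/
noncomputable def Phi (z u y : ℂ) : ℂ := ∑' n : ℕ, z ^ n / (y + n) ^ u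

/-!
Since `Re (y + n) > 0` and `Im (y + n)` is constant, `(y + n)^u = Θ(n^{Re u})`, so the coefficients
`(y + n)^{-u}` grow at most polynomially. On every disc of radius `r < 1` the series `Σ zⁿ (y + n)^{-u}`
is therefore dominated by a summable series, hence (Weierstrass) holomorphic and differentiable
termwise, which gives `z ∂Φ/∂z = Σ n zⁿ (y + n)^{-u}`. The identity is then the termwise identity
`(y + n)^{1-u} = y (y + n)^{-u} + n (y + n)^{-u}`.
-/

open Asymptotics Filter Metric

section PowerSeries

variable {a : ℕ → ℂ} {r : ℝ}

theorem norm_pow_mul_le_of_norm_le {z : ℂ} (hz : ‖z‖ ≤ r) (n : ℕ) :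
    ‖z ^ n * a n‖ ≤ ‖a n‖ * r ^ n := by
  rw [norm_mul, norm_pow, mul_comm]
  gcongr

theorem summable_norm_mul_pow_of_isBigO {k : ℕ}
    (ha : a =O[atTop] fun n => ((n ^ k : ℕ) : ℂ)) (hr₀ : 0 ≤ r) (hr : r < 1) :
    Summable fun n => ‖a n‖ * r ^ n := by
  have hr' : ‖(r : ℂ)‖ < 1 := by rwa [Complex.norm_of_nonneg hr₀]
  refine (summable_norm_mul_geometric_of_norm_lt_one' hr' ha).congr fun n => ?_
  rw [norm_mul, norm_pow, Complex.norm_of_nonneg hr₀]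

theorem summable_pow_mul (ha : Summable fun n => ‖a n‖ * r ^ n) {z : ℂ} (hz : ‖z‖ ≤ r) :
    Summable fun n => z ^ n * a n :=
  ha.of_norm_bounded (norm_pow_mul_le_of_norm_le hz)

theorem differentiableOn_tsum_pow_mul (ha : Summable fun n => ‖a n‖ * r ^ n) :
    DifferentiableOn ℂ (fun w => ∑' n, w ^ n * a n) (ball 0 r) :=
  Complex.differentiableOn_tsum_of_summable_norm ha
    (fun n => ((differentiable_pow n).mul_const _).differentiableOn) isOpen_ball
    fun n _ hw => norm_pow_mul_le_of_norm_le (mem_ball_zero_iff.1 hw).le n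

theorem hasSum_mul_deriv_tsum_pow_mul (ha : Summable fun n => ‖a n‖ * r ^ n) {z : ℂ}
    (hz : z ∈ ball 0 r) :
    HasSum (fun n => n * (z ^ n * a n)) (z * deriv (fun w => ∑' n, w ^ n * a n) z) := by
  have h := (Complex.hasSum_deriv_of_summable_norm ha
    (fun n => ((differentiable_pow n).mul_const _).differentiableOn) isOpen_ball
    (fun n _ hw => norm_pow_mul_le_of_norm_le (mem_ball_zero_iff.1 hw).le n) hz).mul_left z
  refine h.congr_fun fun n => ?_
  rcases n with _ | m
  · simp
  · rw [deriv_mul_const (differentiableAt_pow _), deriv_pow_field]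
    push_cast
    ring

end PowerSeries

theorem add_natCast_ne_zero_of_re_pos {y : ℂ} (hy : 0 < y.re) (n : ℕ) : y + n ≠ 0 := by
  intro h
  have := congrArg Complex.re h
  simp only [Complex.add_re, Complex.natCast_re, Complex.zero_re] at this
  linarith [n.cast_nonneg (α := ℝ)]

theorem isBigO_inv_cpow_add_natCast {y : ℂ} (hy : 0 < y.re) (u : ℂ) :
    ∃ k : ℕ, (fun n : ℕ => ((y + n) ^ u)⁻¹) =O[atTop] fun n => ((n ^ k : ℕ) : ℂ) := by
  have h_norm : (fun n : ℕ => ‖y + n‖) =Θ[atTop] fun n => (n : ℝ) := by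
    have hn : Tendsto (norm ∘ fun n : ℕ => (n : ℂ)) atTop atTop := by
      simpa [Function.comp_def] using tendsto_natCast_atTop_atTop
    simpa [add_comm] using isTheta_norm_left.2 <| isTheta_norm_right.2
      (IsEquivalent.refl.add_const_of_norm_tendsto_atTop (c := y) hn).isTheta
  have h_cpow : (fun n : ℕ => (y + n) ^ u) =Θ[atTop] fun n => (n : ℝ) ^ u.re :=
    (Complex.isTheta_cpow_const_rpow fun _ _ =>
        Eventually.of_forall (add_natCast_ne_zero_of_re_pos hy)).trans
      (h_norm.rpow (Eventually.of_forall fun _ => norm_nonneg _)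
        (Eventually.of_forall fun _ => Nat.cast_nonneg _))
  refine ⟨⌈-u.re⌉₊, h_cpow.inv.isBigO.trans (IsBigO.of_bound 1 ?_)⟩
  filter_upwards [eventually_ge_atTop 1] with n hn
  have hn' : (1 : ℝ) ≤ n := by exact_mod_cast hn
  rw [one_mul, Complex.norm_natCast, Real.norm_eq_abs, abs_inv, abs_of_nonneg (by positivity),
    ← Real.rpow_neg (by positivity), Nat.cast_pow, ← Real.rpow_natCast]
  exact Real.rpow_le_rpow_of_exponent_le hn' (Nat.le_ceil _)

theorem div_cpow_sub_one {x : ℂ} (hx : x ≠ 0) (w u : ℂ) :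
    w / x ^ (u - 1) = x * (w * (x ^ u)⁻¹) := by
  have hxu : x ^ u ≠ 0 := Complex.cpow_ne_zero_iff.2 (.inl hx)
  rw [Complex.cpow_sub _ _ hx, Complex.cpow_one]
  field_simp

theorem Phi_eq_tsum_pow_mul (z u y : ℂ) : Phi z u y = ∑' n : ℕ, z ^ n * ((y + n) ^ u)⁻¹ := by
  simp only [Phi, div_eq_mul_inv]

theorem stmt1 (u y : ℂ) (hy : 0 < y.re) :
    ∀ z : ℂ, ‖z‖ < 1 →
      DifferentiableAt ℂ (fun w : ℂ => Phi w u y) z ∧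
      Phi z (u - 1) y = y * Phi z u y + z * deriv (fun w : ℂ => Phi w u y) z := by
  intro z hz
  obtain ⟨k, hk⟩ := isBigO_inv_cpow_add_natCast hy u
  obtain ⟨r, hzr, hr₁⟩ := exists_between hz
  have ha := summable_norm_mul_pow_of_isBigO hk ((norm_nonneg z).trans hzr.le) hr₁
  have hz' : z ∈ ball (0 : ℂ) r := mem_ball_zero_iff.2 hzr
  simp only [Phi_eq_tsum_pow_mul]
  refine ⟨(differentiableOn_tsum_pow_mul ha).differentiableAt (isOpen_ball.mem_nhds hz'), ?_⟩
  rw [← ((summable_pow_mul ha hzr.le).hasSum.mul_left y).add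
    (hasSum_mul_deriv_tsum_pow_mul ha hz') |>.tsum_eq]
  refine tsum_congr fun n => ?_
  rw [← div_eq_mul_inv, div_cpow_sub_one (add_natCast_ne_zero_of_re_pos hy n)]
  ring
end

section
/- Let q ∈ [0,1], let r₀ > 0, and let a, b, c : [0, r₀] → ℝ be continuous functions such that for all U ∈ [0, r₀]: a(U) > 0, c(U) > 0 and −√(a(U)c(U)) ≤ b(U) < √(a(U)c(U)). Then there exist M > 0 and δ > 0 such that for all (U,Y) ∈ [0,δ]² with U^{2−q}·Y^q ≠ 0, one has (a(U)·Y² − 2·b(U)·U·Y + c(U)·U²)/(U^{2−q}·Y^q) ≥ M. -/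
/-!
Since `b < √(ac)`, the form `a y² - 2 b u y + c u²` is positive on the closed quadrant minus
the origin. By homogeneity and compactness of `[0, r₀] × {u, y ≥ 0, max u y = 1}` it is
therefore at least `ε · max(u, y)²` for some `ε > 0` uniformly in the parameter, while
`U^(2-q) Y^q ≤ max(U, Y)^(2-q) max(U, Y)^q = max(U, Y)²`.
-/

open Set

def quadForm (a b c u y : ℝ) : ℝ := a * y ^ 2 - 2 * b * u * y + c * u ^ 2

lemma quadForm_mul (a b c t u y : ℝ) :
    quadForm a b c (t * u) (t * y) = t ^ 2 * quadForm a b c u y := by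
  unfold quadForm; ring

lemma quadForm_pos {a b c u y : ℝ} (ha : 0 < a) (hc : 0 < c) (hb : b < √(a * c))
    (hu : 0 ≤ u) (hy : 0 ≤ y) (hne : 0 < max u y) : 0 < quadForm a b c u y := by
  have amgm : 2 * √(a * c) * u * y ≤ a * y ^ 2 + c * u ^ 2 := by
    rw [Real.sqrt_mul ha.le]
    nlinarith [sq_nonneg (√a * y - √c * u), Real.sq_sqrt ha.le, Real.sq_sqrt hc.le]
  unfold quadForm
  rcases hu.eq_or_lt with rfl | hu'
  · have hy' : 0 < y := by simpa using hne
    nlinarith [mul_pos ha (mul_pos hy' hy')]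
  rcases hy.eq_or_lt with rfl | hy'
  · nlinarith [mul_pos hc (mul_pos hu' hu')]
  nlinarith [mul_pos (mul_pos (sub_pos.2 hb) hu') hy']

def unitQuadrantFaces : Set (ℝ × ℝ) := (Icc 0 1 ×ˢ Icc 0 1) ∩ {p | max p.1 p.2 = 1}

lemma isCompact_unitQuadrantFaces : IsCompact unitQuadrantFaces :=
  (isCompact_Icc.prod isCompact_Icc).inter_right (isClosed_eq (by fun_prop) continuous_const)

lemma div_max_mem_unitQuadrantFaces {u y : ℝ} (hu : 0 ≤ u) (hy : 0 ≤ y) (hm : 0 < max u y) :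
    (u / max u y, y / max u y) ∈ unitQuadrantFaces := by
  refine ⟨⟨⟨by positivity, (div_le_one hm).2 (le_max_left _ _)⟩,
    ⟨by positivity, (div_le_one hm).2 (le_max_right _ _)⟩⟩, ?_⟩
  show max (u / max u y) (y / max u y) = 1
  rw [max_div_div_right hm.le, div_self hm.ne']

lemma IsCompact.exists_pos_forall_le {X : Type*} [TopologicalSpace X] {K : Set X} {f : X → ℝ}
    (hK : IsCompact K) (hf : ContinuousOn f K) (hpos : ∀ x ∈ K, 0 < f x) :
    ∃ ε > 0, ∀ x ∈ K, ε ≤ f x := by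
  rcases K.eq_empty_or_nonempty with rfl | hne
  · exact ⟨1, one_pos, by simp⟩
  obtain ⟨x₀, hx₀, hmin⟩ := hK.exists_isMinOn hne hf
  exact ⟨f x₀, hpos x₀ hx₀, fun x hx => hmin hx⟩

lemma IsCompact.exists_pos_mul_max_sq_le_quadForm {X : Type*} [TopologicalSpace X] {s : Set X}
    (hs : IsCompact s) {a b c : X → ℝ} (ha : ContinuousOn a s) (hb : ContinuousOn b s)
    (hc : ContinuousOn c s) (hapos : ∀ x ∈ s, 0 < a x) (hcpos : ∀ x ∈ s, 0 < c x)
    (hbub : ∀ x ∈ s, b x < √(a x * c x)) :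
    ∃ ε > 0, ∀ x ∈ s, ∀ u y : ℝ, 0 ≤ u → 0 ≤ y →
      ε * max u y ^ 2 ≤ quadForm (a x) (b x) (c x) u y := by
  have hcont : ContinuousOn
      (fun p : X × ℝ × ℝ => quadForm (a p.1) (b p.1) (c p.1) p.2.1 p.2.2)
      (s ×ˢ unitQuadrantFaces) := by
    have hfst : MapsTo Prod.fst (s ×ˢ unitQuadrantFaces) s := fun p hp => hp.1
    have ha' := ha.comp continuousOn_fst hfst
    have hb' := hb.comp continuousOn_fst hfst
    have hc' := hc.comp continuousOn_fst hfst
    unfold quadForm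
    fun_prop
  obtain ⟨ε, hε, hle⟩ := (hs.prod isCompact_unitQuadrantFaces).exists_pos_forall_le hcont
    fun _ ⟨hx, ⟨⟨hu, _⟩, ⟨hy, _⟩⟩, hmax⟩ =>
      quadForm_pos (hapos _ hx) (hcpos _ hx) (hbub _ hx) hu hy (zero_lt_one.trans_eq hmax.symm)
  refine ⟨ε, hε, fun x hx u y hu hy => ?_⟩
  rcases (le_max_of_le_left hu).eq_or_lt with hm | hm
  · obtain ⟨rfl, rfl⟩ : u = 0 ∧ y = 0 := by
      constructor <;> linarith [le_max_left u y, le_max_right u y]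
    simp [quadForm]
  calc ε * max u y ^ 2
      ≤ quadForm (a x) (b x) (c x) (u / max u y) (y / max u y) * max u y ^ 2 :=
        mul_le_mul_of_nonneg_right (hle (x, _, _) ⟨hx, div_max_mem_unitQuadrantFaces hu hy hm⟩)
          (sq_nonneg _)
    _ = quadForm (a x) (b x) (c x) u y := by
        rw [mul_comm, ← quadForm_mul, mul_div_cancel₀ _ hm.ne', mul_div_cancel₀ _ hm.ne']

lemma rpow_sub_mul_rpow_le_max_sq {u y q : ℝ} (hu : 0 ≤ u) (hy : 0 ≤ y) (hq0 : 0 ≤ q)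
    (hq2 : q ≤ 2) : u ^ (2 - q) * y ^ q ≤ max u y ^ 2 := by
  have hm : 0 ≤ max u y := le_max_of_le_left hu
  calc u ^ (2 - q) * y ^ q ≤ max u y ^ (2 - q) * max u y ^ q :=
        mul_le_mul (Real.rpow_le_rpow hu (le_max_left _ _) (by linarith))
          (Real.rpow_le_rpow hy (le_max_right _ _) hq0) (by positivity) (by positivity)
    _ = max u y ^ (2 : ℝ) := by rw [← Real.rpow_add' hm (by norm_num)]; ring_nf
    _ = max u y ^ 2 := Real.rpow_two _

theorem stmt5_general (q r₀ : ℝ) (hq0 : 0 ≤ q) (hq1 : q ≤ 1) (hr : 0 < r₀)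
    (a b c : ℝ → ℝ)
    (ha : ContinuousOn a (Icc 0 r₀)) (hb : ContinuousOn b (Icc 0 r₀))
    (hc : ContinuousOn c (Icc 0 r₀))
    (hapos : ∀ U ∈ Icc (0 : ℝ) r₀, 0 < a U)
    (hcpos : ∀ U ∈ Icc (0 : ℝ) r₀, 0 < c U)
    (hbub : ∀ U ∈ Icc (0 : ℝ) r₀, b U < Real.sqrt (a U * c U)) :
    ∃ M > (0 : ℝ), ∃ δ > (0 : ℝ), ∀ U Y : ℝ, U ∈ Icc 0 δ → Y ∈ Icc 0 δ →
      U ^ (2 - q) * Y ^ q ≠ 0 →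
      M ≤ (a U * Y ^ 2 - 2 * b U * U * Y + c U * U ^ 2) / (U ^ (2 - q) * Y ^ q) := by
  obtain ⟨ε, hε, hle⟩ :=
    isCompact_Icc.exists_pos_mul_max_sq_le_quadForm ha hb hc hapos hcpos hbub
  refine ⟨ε, hε, r₀, hr, fun U Y hU hY hD => ?_⟩
  have hDpos : 0 < U ^ (2 - q) * Y ^ q :=
    lt_of_le_of_ne (mul_nonneg (Real.rpow_nonneg hU.1 _) (Real.rpow_nonneg hY.1 _)) (Ne.symm hD)
  rw [le_div_iff₀ hDpos]
  calc ε * (U ^ (2 - q) * Y ^ q) ≤ ε * max U Y ^ 2 := by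
        gcongr
        exact rpow_sub_mul_rpow_le_max_sq hU.1 hY.1 hq0 (by linarith)
    _ ≤ _ := hle U hU U Y hU.1 hY.1

theorem stmt5 (q r₀ : ℝ) (hq0 : 0 ≤ q) (hq1 : q ≤ 1) (hr : 0 < r₀)
    (a b c : ℝ → ℝ)
    (ha : ContinuousOn a (Icc 0 r₀)) (hb : ContinuousOn b (Icc 0 r₀))
    (hc : ContinuousOn c (Icc 0 r₀))
    (hapos : ∀ U ∈ Icc (0 : ℝ) r₀, 0 < a U)
    (hcpos : ∀ U ∈ Icc (0 : ℝ) r₀, 0 < c U)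
    (hblb : ∀ U ∈ Icc (0 : ℝ) r₀, -Real.sqrt (a U * c U) ≤ b U)
    (hbub : ∀ U ∈ Icc (0 : ℝ) r₀, b U < Real.sqrt (a U * c U)) :
    ∃ M > (0 : ℝ), ∃ δ > (0 : ℝ), ∀ U Y : ℝ, U ∈ Icc 0 δ → Y ∈ Icc 0 δ →
      U ^ (2 - q) * Y ^ q ≠ 0 →
      M ≤ (a U * Y ^ 2 - 2 * b U * U * Y + c U * U ^ 2) / (U ^ (2 - q) * Y ^ q) :=
  stmt5_general q r₀ hq0 hq1 hr a b c ha hb hc hapos hcpos hbub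
end

section
/- Let q ∈ [0,2], let r₀ > 0, and let a, b, c : [0, r₀] → ℝ be continuous functions such that: a(U) > 0 and c(U) > 0 for all U ∈ [0, r₀]; −√(a(U)c(U)) ≤ b(U) < √(a(U)c(U)) for all U ∈ (0, r₀]; b(0) = √(a(0)c(0)); and the limit K = lim_{U→0⁺} (a(U)c(U) − b(U)²)/U² exists and satisfies K > 0. Then there exist M > 0 and δ > 0 such that for all (U,Y) ∈ [0,δ]² with U^{4−q}·Y^q ≠ 0, one has (a(U)·Y² − 2·b(U)·U·Y + c(U)·U²)/(U^{4−q}·Y^q) ≥ M. -/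
/-!
Completing the square, `a Q = (aY - bU)² + (ac - b²)U²` for `Q = aY² - 2bUY + cU²`.
Near `U = 0` the coefficient `a` is pinched between two positive constants, `b` is bounded
above and `ac - b² ≥ (K/2) U²`. Fix a slope `t` large against `b/a`. Below the line
`Y = tU` the discriminant term gives `Q ≳ U⁴ ≳ U^(4-q) Y^q`; above it `aY - bU ≳ Y`, so
`Q ≳ Y² ≥ Y⁴ ≳ U^(4-q) Y^q` once `Y ≤ 1`.
-/

open Set Filter Topology

lemma Real.rpow_mul_rpow_le_of_le_mul {x y t p q : ℝ} (hx : 0 < x) (hy : 0 ≤ y)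
    (hyx : y ≤ t * x) (hq : 0 ≤ q) : x ^ p * y ^ q ≤ t ^ q * x ^ (p + q) := by
  have ht : 0 ≤ t := nonneg_of_mul_nonneg_left (hy.trans hyx) hx
  calc x ^ p * y ^ q ≤ x ^ p * (t * x) ^ q := by gcongr
    _ = t ^ q * x ^ (p + q) := by rw [Real.mul_rpow ht hx.le, Real.rpow_add hx]; ring

lemma div_le_quadratic_of_le_completedSquare {a b c U Y A x : ℝ} (ha : 0 < a) (haA : a ≤ A)
    (hx : 0 ≤ x) (hxQ : x ≤ (a * Y - b * U) ^ 2 + (a * c - b ^ 2) * U ^ 2) :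
    x / A ≤ a * Y ^ 2 - 2 * b * U * Y + c * U ^ 2 := by
  calc x / A ≤ x / a := div_le_div_of_nonneg_left hx ha haA
    _ ≤ _ := by
      rw [div_le_iff₀ ha]
      linarith [show (a * Y - b * U) ^ 2 + (a * c - b ^ 2) * U ^ 2
        = (a * Y ^ 2 - 2 * b * U * Y + c * U ^ 2) * a by ring]

theorem min_mul_rpow_le_quadratic {q α A κ t a b c U Y : ℝ} (hq0 : 0 ≤ q) (hq4 : q ≤ 4)
    (hα : 0 < α) (hκ : 0 ≤ κ) (ht : 0 < t) (haα : α ≤ a) (haA : a ≤ A)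
    (hbt : 2 * b ≤ α * t) (hdisc : κ * U ^ 2 ≤ a * c - b ^ 2) (hU : 0 < U) (hY : 0 ≤ Y)
    (hY1 : Y ≤ 1) :
    min (κ / (A * t ^ q)) (α ^ 2 / (4 * A * t⁻¹ ^ (4 - q))) * (U ^ (4 - q) * Y ^ q)
      ≤ a * Y ^ 2 - 2 * b * U * Y + c * U ^ 2 := by
  have ha : 0 < a := hα.trans_le haα
  have hA : 0 < A := ha.trans_le haA
  rcases le_or_gt Y (t * U) with hYU | hUY
  · have hD : U ^ (4 - q) * Y ^ q ≤ t ^ q * U ^ 4 := by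
      simpa using Real.rpow_mul_rpow_le_of_le_mul (p := 4 - q) hU hY hYU hq0
    calc _ ≤ κ / (A * t ^ q) * (t ^ q * U ^ 4) := by gcongr; exact min_le_left _ _
      _ = κ * U ^ 4 / A := by field_simp
      _ ≤ _ := div_le_quadratic_of_le_completedSquare ha haA (by positivity)
        (by nlinarith [sq_nonneg (a * Y - b * U), sq_nonneg U])
  · have hY0 : 0 < Y := (mul_pos ht hU).trans hUY
    have hUY' : U ≤ t⁻¹ * Y := by rw [inv_mul_eq_div, le_div_iff₀ ht]; linarith
    have hD : U ^ (4 - q) * Y ^ q ≤ t⁻¹ ^ (4 - q) * Y ^ 4 := by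
      rw [mul_comm]
      simpa using Real.rpow_mul_rpow_le_of_le_mul (p := q) (q := 4 - q) hY0 hU.le hUY'
        (by linarith)
    have hlin : α * Y / 2 ≤ a * Y - b * U := by nlinarith
    calc _ ≤ α ^ 2 / (4 * A * t⁻¹ ^ (4 - q)) * (t⁻¹ ^ (4 - q) * Y ^ 4) := by
          gcongr; exact min_le_right _ _
      _ = (α * Y ^ 2 / 2) ^ 2 / A := by field_simp; ring
      _ ≤ (α * Y / 2) ^ 2 / A := by gcongr; nlinarith
      _ ≤ _ := div_le_quadratic_of_le_completedSquare ha haA (by positivity)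
        (by nlinarith [mul_nonneg hκ (sq_nonneg U), pow_le_pow_left₀ (by positivity) hlin 2])

lemma eventually_mul_sq_le_of_tendsto_div_sq {f : ℝ → ℝ} {κ K : ℝ}
    (hf : Tendsto (fun x => f x / x ^ 2) (𝓝[>] 0) (𝓝 K)) (hκ : κ < K) :
    ∀ᶠ x in 𝓝[>] 0, κ * x ^ 2 ≤ f x := by
  filter_upwards [hf.eventually (lt_mem_nhds hκ), self_mem_nhdsWithin] with x hx hx0
  exact ((lt_div_iff₀ (pow_pos hx0 2)).mp hx).le

theorem stmt6_general (q r₀ K : ℝ) (hq0 : 0 ≤ q) (hq2 : q ≤ 2) (hr : 0 < r₀)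
    (a b c : ℝ → ℝ)
    (ha : ContinuousOn a (Icc 0 r₀)) (hb : ContinuousOn b (Icc 0 r₀))
    (hapos : ∀ U ∈ Icc (0 : ℝ) r₀, 0 < a U)
    (hK : Filter.Tendsto (fun U : ℝ => (a U * c U - (b U) ^ 2) / U ^ 2)
      (nhdsWithin 0 (Ioi 0)) (nhds K))
    (hKpos : 0 < K) :
    ∃ M > (0 : ℝ), ∃ δ > (0 : ℝ), ∀ U Y : ℝ, U ∈ Icc 0 δ → Y ∈ Icc 0 δ →
      U ^ (4 - q) * Y ^ q ≠ 0 →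
      M ≤ (a U * Y ^ 2 - 2 * b U * U * Y + c U * U ^ 2) / (U ^ (4 - q) * Y ^ q) := by
  have h0 : (0 : ℝ) ∈ Icc 0 r₀ := ⟨le_rfl, hr.le⟩
  have ha0 : 0 < a 0 := hapos 0 h0
  set t := 4 * (|b 0| + 1) / a 0
  have ht : 0 < t := by positivity
  have hbt : a 0 / 2 * t = 2 * (|b 0| + 1) := by simp only [t]; field_simp; ring
  have hlocal : ∀ᶠ U in 𝓝[>] 0, a U ∈ Ioo (a 0 / 2) (2 * a 0) ∧ b U < |b 0| + 1 ∧
      K / 2 * U ^ 2 ≤ a U * c U - b U ^ 2 :=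
    (((ha 0 h0).mono_of_mem_nhdsWithin (Icc_mem_nhdsGT hr)).eventually
      (Ioo_mem_nhds (by linarith) (by linarith))).and <|
    (((hb 0 h0).mono_of_mem_nhdsWithin (Icc_mem_nhdsGT hr)).eventually
      (gt_mem_nhds ((le_abs_self _).trans_lt (lt_add_one _)))).and <|
    eventually_mul_sq_le_of_tendsto_div_sq hK (half_lt_self hKpos)
  obtain ⟨ε, hε, hεlocal⟩ := (nhdsGT_basis 0).eventually_iff.mp hlocal
  refine ⟨min (K / 2 / (2 * a 0 * t ^ q)) ((a 0 / 2) ^ 2 / (4 * (2 * a 0) * t⁻¹ ^ (4 - q))),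
    by positivity, min (ε / 2) 1, by positivity, fun U Y hU hY hD => ?_⟩
  have hU0 : 0 < U := hU.1.lt_of_ne <| by
    rintro rfl
    simp [Real.zero_rpow (by linarith : 4 - q ≠ 0)] at hD
  obtain ⟨⟨haU, haU'⟩, hbU, hdisc⟩ :=
    hεlocal ⟨hU0, hU.2.trans_lt ((min_le_left _ _).trans_lt (half_lt_self hε))⟩
  have hDpos : 0 < U ^ (4 - q) * Y ^ q :=
    (mul_nonneg (Real.rpow_nonneg hU.1 _) (Real.rpow_nonneg hY.1 _)).lt_of_ne hD.symm
  rw [le_div_iff₀ hDpos]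
  exact min_mul_rpow_le_quadratic hq0 (by linarith) (half_pos ha0) (half_pos hKpos).le ht
    haU.le haU'.le (by linarith) hdisc hU0 hY.1 (hY.2.trans (min_le_right _ _))

theorem stmt6 (q r₀ K : ℝ) (hq0 : 0 ≤ q) (hq2 : q ≤ 2) (hr : 0 < r₀)
    (a b c : ℝ → ℝ)
    (ha : ContinuousOn a (Icc 0 r₀)) (hb : ContinuousOn b (Icc 0 r₀))
    (hc : ContinuousOn c (Icc 0 r₀))
    (hapos : ∀ U ∈ Icc (0 : ℝ) r₀, 0 < a U)
    (hcpos : ∀ U ∈ Icc (0 : ℝ) r₀, 0 < c U)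
    (hblb : ∀ U ∈ Ioc (0 : ℝ) r₀, -Real.sqrt (a U * c U) ≤ b U)
    (hbub : ∀ U ∈ Ioc (0 : ℝ) r₀, b U < Real.sqrt (a U * c U))
    (hb0 : b 0 = Real.sqrt (a 0 * c 0))
    (hK : Filter.Tendsto (fun U : ℝ => (a U * c U - (b U) ^ 2) / U ^ 2)
      (nhdsWithin 0 (Ioi 0)) (nhds K))
    (hKpos : 0 < K) :
    ∃ M > (0 : ℝ), ∃ δ > (0 : ℝ), ∀ U Y : ℝ, U ∈ Icc 0 δ → Y ∈ Icc 0 δ →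
      U ^ (4 - q) * Y ^ q ≠ 0 →
      M ≤ (a U * Y ^ 2 - 2 * b U * U * Y + c U * U ^ 2) / (U ^ (4 - q) * Y ^ q) :=
  stmt6_general q r₀ K hq0 hq2 hr a b c ha hb hapos hK hKpos
end

section
/- Let h = [[α, 0],[γ, δ]] ∈ GL₂(ℂ) (so α ≠ 0 and δ ≠ 0), and suppose there exists ρ > 0 such that the only pair (U,Y) ∈ [0,ρ]² with γU + δ ≠ 0 and αU = Y·(γU + δ) is (U,Y) = (0,0). Let 0 ≤ q ≤ 1. Then there exist M > 0 and δ₀ > 0 such that for all U, Y ∈ (0, δ₀): (i) if α·conj(δ) ∉ ℝ_{>0}, then 1/|αU − Y·(γU + δ)| ≤ M/(U^{1−q}·Y^q); (ii) if α·conj(δ) ∈ ℝ_{>0}, then 1/|αU − Y·(γU + δ)| ≤ M/(U^{2(1−q)}·Y^{2q}). -/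
open Set

/-- `posReal z` means `z ∈ ℝ_{>0}`. -/
def posReal (z : ℂ) : Prop := z.im = 0 ∧ 0 < z.re

/-!
Put `ω = α / δ` and `ζ = γ / δ`, so that `α U - Y (γ U + δ) = δ ((ω U - Y) - ζ U Y)`, and let
`m = max U Y`. Since `U ^ (1 - q) * Y ^ q ≤ m`, it suffices to bound `‖(ω U - Y) - ζ U Y‖` from
below by a multiple of `m` (case (i)) or of `m ^ 2` (case (ii)).

If `ω ∉ ℝ_{>0}`, the linear part `ω U - Y` vanishes nowhere on the closed quadrant except at the
origin, hence is `≥ c m`, and the quadratic term `ζ U Y = O(m ^ 2)` is negligible near the origin.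

If `ω = t > 0`, the linear part vanishes along `Y = t U`, and the isolated-zero hypothesis forces
`ζ ∉ ℝ`. Then `1` and `ζ` are linearly independent over `ℝ`, so the norm is comparable to
`|t U - Y| + U Y`, which is `≥ c m ^ 2` on the unit square.
-/

open Filter Topology ComplexConjugate

lemma posReal_iff_exists {z : ℂ} : posReal z ↔ ∃ t : ℝ, 0 < t ∧ z = t := by
  constructor
  · rintro ⟨him, hre⟩
    exact ⟨z.re, hre, Complex.ext rfl (by simpa using him)⟩
  · rintro ⟨t, ht, rfl⟩
    exact ⟨Complex.ofReal_im t, ht⟩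

lemma posReal_div_iff {α δ : ℂ} (hδ : δ ≠ 0) :
    posReal (α / δ) ↔ posReal (α * conj δ) := by
  have hN : 0 < (Complex.normSq δ)⁻¹ := inv_pos.mpr (Complex.normSq_pos.mpr hδ)
  rw [div_eq_mul_inv, Complex.inv_def, ← mul_assoc, posReal, posReal,
    Complex.re_mul_ofReal, Complex.im_mul_ofReal, mul_eq_zero, mul_pos_iff_of_pos_right hN,
    or_iff_left hN.ne']

lemma rpow_mul_rpow_le_max {U Y q : ℝ} (hU : 0 ≤ U) (hY : 0 ≤ Y) (hq0 : 0 ≤ q) (hq1 : q ≤ 1) :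
    U ^ (1 - q) * Y ^ q ≤ max U Y :=
  calc U ^ (1 - q) * Y ^ q ≤ (1 - q) * U + q * Y :=
        Real.geom_mean_le_arith_mean2_weighted (by linarith) hq0 hU hY (by ring)
    _ ≤ (1 - q) * max U Y + q * max U Y := by
        gcongr
        exacts [le_max_left U Y, le_max_right U Y]
    _ = max U Y := by ring

lemma one_div_le_div_of_mul_le {x P c : ℝ} (hP : 0 < P) (hc : 0 < c) (h : c * P ≤ x) :
    1 / x ≤ 1 / c / P := by
  rw [div_div, div_le_div_iff₀ ((mul_pos hc hP).trans_le h) (mul_pos hc hP)]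
  linarith

lemma exists_abs_add_abs_le_norm_sub_mul {ζ : ℂ} (hζ : ζ.im ≠ 0) :
    ∃ C > 0, ∀ a b : ℝ, |a| + |b| ≤ C * ‖(a : ℂ) - ζ * b‖ := by
  have hi : 0 < |ζ.im| := abs_pos.mpr hζ
  refine ⟨1 + (1 + ‖ζ‖) / |ζ.im|, by positivity, fun a b => ?_⟩
  set z : ℂ := a - ζ * b
  have hb : |b| ≤ ‖z‖ / |ζ.im| := by
    rw [le_div_iff₀ hi]
    have : |z.im| = |b| * |ζ.im| := by simp [z, abs_mul, mul_comm]
    exact this ▸ Complex.abs_im_le_norm z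
  have ha : |a| ≤ ‖z‖ + ‖ζ‖ * |b| := by
    calc |a| = ‖z + ζ * b‖ := by simp [z]
      _ ≤ ‖z‖ + ‖ζ‖ * |b| := by simpa using norm_add_le z (ζ * b)
  calc |a| + |b| ≤ ‖z‖ + (1 + ‖ζ‖) * (‖z‖ / |ζ.im|) := by nlinarith [norm_nonneg ζ]
    _ = (1 + (1 + ‖ζ‖) / |ζ.im|) * ‖z‖ := by ring

lemma exists_max_le_norm_mul_sub {ω : ℂ} (hω0 : ω ≠ 0) (hω : ¬ posReal ω) :
    ∃ C > 0, ∀ u y : ℝ, 0 ≤ u → 0 ≤ y → max u y ≤ C * ‖ω * u - y‖ := by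
  by_cases him : ω.im = 0
  · obtain ⟨w, rfl⟩ : ∃ w : ℝ, ω = w := ⟨ω.re, Complex.ext rfl (by simpa using him)⟩
    have hw : w < 0 := by
      refine lt_of_le_of_ne (not_lt.mp fun h => hω ⟨him, by simpa using h⟩) ?_
      exact_mod_cast hω0
    have hk : w * (1 / w) = 1 := mul_one_div_cancel hw.ne
    have hk0 : 1 / w < 0 := one_div_neg.mpr hw
    refine ⟨1 - 1 / w, by linarith, fun u y hu hy => ?_⟩
    rw [← Complex.ofReal_mul, ← Complex.ofReal_sub, Complex.norm_real, Real.norm_eq_abs,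
      abs_of_nonpos (by nlinarith)]
    refine (max_le_add_of_nonneg hu hy).trans ?_
    nlinarith
  · obtain ⟨C, hC, hle⟩ := exists_abs_add_abs_le_norm_sub_mul him
    refine ⟨C, hC, fun u y hu hy => ?_⟩
    have := hle y u
    rw [abs_of_nonneg hu, abs_of_nonneg hy, ← norm_neg, neg_sub, mul_comm] at this
    exact (max_le_add_of_nonneg hu hy).trans (by linarith)

lemma sq_max_le_abs_sub_add_mul {t U Y : ℝ} (ht : 0 < t) (hU : 0 ≤ U) (hY : 0 ≤ Y)
    (hU1 : U ≤ 1) (hY1 : Y ≤ 1) :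
    min t t⁻¹ / 2 * max U Y ^ 2 ≤ |t * U - Y| + U * Y := by
  have htt : t * t⁻¹ = 1 := mul_inv_cancel₀ ht.ne'
  have hmin_t : min t t⁻¹ ≤ t := min_le_left _ _
  have hmin_inv : min t t⁻¹ ≤ t⁻¹ := min_le_right _ _
  have hmin_one : min t t⁻¹ ≤ 1 := by
    rcases le_total t 1 with h | h
    · linarith
    · linarith [inv_le_one_of_one_le₀ h]
  have hmin0 : 0 < min t t⁻¹ := lt_min ht (inv_pos.mpr ht)
  rcases le_total U Y with hUY | hYU
  · rw [max_eq_right hUY]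
    by_cases h : 2 * (t * U) ≤ Y
    · nlinarith [le_abs_self (t * U - Y), neg_abs_le (t * U - Y), mul_nonneg hU hY]
    · nlinarith [abs_nonneg (t * U - Y), mul_le_mul_of_nonneg_right hmin_inv (sq_nonneg Y)]
  · rw [max_eq_left hYU]
    by_cases h : 2 * Y ≤ t * U
    · nlinarith [le_abs_self (t * U - Y), mul_nonneg hU hY]
    · nlinarith [abs_nonneg (t * U - Y)]

lemma im_div_ne_zero_of_isolated_zero {α γ δ : ℂ} (hδ : δ ≠ 0) {t : ℝ} (ht : 0 < t)
    (hαt : α = t * δ)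
    (hsol : ∃ ρ > (0 : ℝ), ∀ U Y : ℝ, U ∈ Icc 0 ρ → Y ∈ Icc 0 ρ →
      γ * U + δ ≠ 0 → α * U = Y * (γ * U + δ) → U = 0 ∧ Y = 0) :
    (γ / δ).im ≠ 0 := by
  intro him
  obtain ⟨ρ, hρ, hsol⟩ := hsol
  set r := (γ / δ).re
  have hγ : γ = r * δ := by
    rw [← div_eq_iff hδ]
    exact Complex.ext rfl (by simpa using him)
  -- for real `γ / δ = r`, the curve `Y = t U / (1 + r U)` consists of solutions
  have hY : Tendsto (fun U : ℝ => t * U / (1 + r * U)) (𝓝 0) (𝓝 0) := by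
    have : ContinuousAt (fun U : ℝ => t * U / (1 + r * U)) 0 :=
      (continuousAt_const.mul continuousAt_id).div
        (continuousAt_const.add (continuousAt_const.mul continuousAt_id)) (by simp)
    simpa using this.tendsto
  have hden : Tendsto (fun U : ℝ => 1 + r * U) (𝓝 0) (𝓝 1) := by
    have : ContinuousAt (fun U : ℝ => 1 + r * U) 0 :=
      continuousAt_const.add (continuousAt_const.mul continuousAt_id)
    simpa using this.tendsto
  obtain ⟨U, ⟨hUρ, hYρ, hden0⟩, hU0 : 0 < U⟩ :=
    ((((eventually_le_nhds hρ).and ((hY.eventually (eventually_le_nhds hρ)).and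
      (hden.eventually (eventually_gt_nhds one_pos)))).filter_mono nhdsWithin_le_nhds).and
      self_mem_nhdsWithin).exists (f := 𝓝[>] (0 : ℝ))
  have hfac : γ * U + δ = ((1 + r * U : ℝ) : ℂ) * δ := by rw [hγ]; push_cast; ring
  have hden0' : ((1 + r * U : ℝ) : ℂ) ≠ 0 := by exact_mod_cast hden0.ne'
  refine hU0.ne' (hsol U (t * U / (1 + r * U)) ⟨hU0.le, hUρ⟩ ⟨by positivity, hYρ⟩ ?_ ?_).1
  · rw [hfac]
    exact mul_ne_zero hden0' hδ
  · rw [hfac, hαt, Complex.ofReal_div, div_mul_eq_mul_div, eq_div_iff hden0']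
    push_cast
    ring

lemma exists_mul_sq_max_le_norm {ζ : ℂ} (hζ : ζ.im ≠ 0) {t : ℝ} (ht : 0 < t) :
    ∃ c > 0, ∀ U Y : ℝ, 0 ≤ U → U ≤ 1 → 0 ≤ Y → Y ≤ 1 →
      c * max U Y ^ 2 ≤ ‖t * U - Y * (ζ * U + 1)‖ := by
  obtain ⟨C, hC, hle⟩ := exists_abs_add_abs_le_norm_sub_mul hζ
  have hmin0 : 0 < min t t⁻¹ := lt_min ht (inv_pos.mpr ht)
  refine ⟨min t t⁻¹ / 2 / C, by positivity, fun U Y hU hU1 hY hY1 => ?_⟩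
  have hsplit : (t * U - Y * (ζ * U + 1) : ℂ) = ((t * U - Y : ℝ) : ℂ) - ζ * ((U * Y : ℝ) : ℂ) := by
    push_cast
    ring
  have key := hle (t * U - Y) (U * Y)
  rw [← hsplit, abs_of_nonneg (mul_nonneg hU hY)] at key
  rw [div_mul_eq_mul_div, div_le_iff₀ hC]
  linarith [sq_max_le_abs_sub_add_mul ht hU hY hU1 hY1]

lemma exists_mul_max_le_norm {ω : ℂ} (hω0 : ω ≠ 0) (hω : ¬ posReal ω) (ζ : ℂ) :
    ∃ c > 0, ∃ d > 0, ∀ U Y : ℝ, 0 ≤ U → U ≤ d → 0 ≤ Y → Y ≤ d →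
      c * max U Y ≤ ‖ω * U - Y * (ζ * U + 1)‖ := by
  obtain ⟨C, hC, hle⟩ := exists_max_le_norm_mul_sub hω0 hω
  refine ⟨1 / (2 * C), by positivity, 1 / (2 * C * (‖ζ‖ + 1)), by positivity,
    fun U Y hU hUd hY hYd => ?_⟩
  set m := max U Y
  have hm0 : 0 ≤ m := hU.trans (le_max_left U Y)
  have hmd : m ≤ 1 / (2 * C * (‖ζ‖ + 1)) := max_le hUd hYd
  have hquad : ‖ζ‖ * (U * Y) ≤ m / (2 * C) := by
    have hUY : U * Y ≤ m * m := mul_le_mul (le_max_left U Y) (le_max_right U Y) hY hm0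
    have hζm : ‖ζ‖ * m ≤ 1 / (2 * C) := by
      rw [le_div_iff₀ (by positivity)] at hmd
      rw [le_div_iff₀ (by positivity)]
      nlinarith [norm_nonneg ζ]
    calc ‖ζ‖ * (U * Y) ≤ ‖ζ‖ * m * m := by rw [mul_assoc]; gcongr
      _ ≤ 1 / (2 * C) * m := by gcongr
      _ = m / (2 * C) := by ring
  have hsplit : (ω * U - Y * (ζ * U + 1) : ℂ) = (ω * U - Y) - ζ * ((U * Y : ℝ) : ℂ) := by
    push_cast
    ring
  have htri : ‖(ω * U - Y : ℂ)‖ - ‖ζ‖ * (U * Y) ≤ ‖ω * U - Y * (ζ * U + 1)‖ := by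
    rw [hsplit]
    simpa [abs_of_nonneg hU, abs_of_nonneg hY] using
      norm_sub_norm_le (ω * U - Y : ℂ) (ζ * (U * Y : ℝ))
  have hlin : m / C ≤ ‖(ω * U - Y : ℂ)‖ := by
    rw [div_le_iff₀ hC, mul_comm]
    exact hle U Y hU hY
  have : 1 / (2 * C) * m = m / C - m / (2 * C) := by field_simp; ring
  linarith

theorem stmt7 (α γ δ : ℂ) (hα : α ≠ 0) (hδ : δ ≠ 0) (q : ℝ)
    (hq0 : 0 ≤ q) (hq1 : q ≤ 1)
    (hsol : ∃ ρ > (0 : ℝ), ∀ U Y : ℝ, U ∈ Icc 0 ρ → Y ∈ Icc 0 ρ →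
      γ * U + δ ≠ 0 → α * U = Y * (γ * U + δ) → U = 0 ∧ Y = 0) :
    ∃ M > (0 : ℝ), ∃ δ₀ > (0 : ℝ), ∀ U Y : ℝ, 0 < U → U < δ₀ → 0 < Y → Y < δ₀ →
      (¬ posReal (α * (starRingEnd ℂ) δ) →
        1 / ‖α * U - Y * (γ * U + δ)‖ ≤ M / (U ^ (1 - q) * Y ^ q)) ∧
      (posReal (α * (starRingEnd ℂ) δ) →
        1 / ‖α * U - Y * (γ * U + δ)‖ ≤
          M / (U ^ (2 * (1 - q)) * Y ^ (2 * q))) := by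
  have hfactor (U Y : ℝ) :
      ‖α * U - Y * (γ * U + δ)‖ = ‖δ‖ * ‖α / δ * U - Y * (γ / δ * U + 1)‖ := by
    rw [← norm_mul]
    congr 1
    field_simp
  by_cases hpos : posReal (α * conj δ)
  · obtain ⟨t, ht, hωt⟩ := posReal_iff_exists.mp ((posReal_div_iff hδ).mpr hpos)
    obtain ⟨c, hc, hlow⟩ := exists_mul_sq_max_le_norm
      (im_div_ne_zero_of_isolated_zero hδ ht ((div_eq_iff hδ).mp hωt) hsol) ht
    refine ⟨1 / (‖δ‖ * c), by positivity, 1, one_pos, fun U Y hU hU1 hY hY1 =>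
      ⟨fun h => absurd hpos h, fun _ => ?_⟩⟩
    have hsq : U ^ (2 * (1 - q)) * Y ^ (2 * q) = (U ^ (1 - q) * Y ^ q) ^ 2 := by
      rw [mul_pow, ← Real.rpow_two, ← Real.rpow_two, ← Real.rpow_mul hU.le,
        ← Real.rpow_mul hY.le, mul_comm (1 - q), mul_comm q]
    rw [hfactor, hωt]
    refine one_div_le_div_of_mul_le (by positivity) (by positivity) ?_
    rw [mul_assoc, hsq]
    gcongr
    calc c * (U ^ (1 - q) * Y ^ q) ^ 2 ≤ c * max U Y ^ 2 := by
          gcongr; exact rpow_mul_rpow_le_max hU.le hY.le hq0 hq1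
      _ ≤ _ := hlow U Y hU.le hU1.le hY.le hY1.le
  · obtain ⟨c, hc, d, hd, hlow⟩ := exists_mul_max_le_norm (div_ne_zero hα hδ)
      (mt (posReal_div_iff hδ).mp hpos) (γ / δ)
    refine ⟨1 / (‖δ‖ * c), by positivity, d, hd, fun U Y hU hUd hY hYd =>
      ⟨fun _ => ?_, fun h => absurd h hpos⟩⟩
    rw [hfactor]
    refine one_div_le_div_of_mul_le (by positivity) (by positivity) ?_
    rw [mul_assoc]
    gcongr
    calc c * (U ^ (1 - q) * Y ^ q) ≤ c * max U Y := by
          gcongr; exact rpow_mul_rpow_le_max hU.le hY.le hq0 hq1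
      _ ≤ _ := hlow U Y hU.le hUd.le hY.le hYd.le
end

section
/- Let g ∈ GL₂(ℂ) act on the Riemann sphere Ĉ = ℂ ∪ {∞} by Möbius transformations, let [1,+∞] = {x ∈ ℝ : x ≥ 1} ∪ {∞} ⊆ Ĉ, and set V(g) = {g1, g∞} ∩ {1, ∞}. Assume g([1,+∞]) ∩ [1,+∞] ⊆ V(g). Let N be an open neighborhood in Ĉ × Ĉ of the finite set {(g^{−1}X₀, X₀) : X₀ ∈ V(g)}. Then there exist ε > 0 and M > 0 such that for all (T,X) ∈ (W_{1,ε} × W_{1,ε}) ∖ N with j_D(g,T) ≠ 0 and gT ≠ X, one has |1/(j_D(g,T)) · 1/(1 − (gT)/X)| ≤ M/|T|, where W_{1,ε} = {z ∈ ℂ : 0 < |z−1| < ε} ∪ {x ∈ ℝ : x > 1}. -/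
open Set

/-- The Möbius transformation associated with the matrix `[[a,b],[c,d]]`, acting on the
Riemann sphere `Ĉ = ℂ ∪ {∞}`, with the usual conventions `gz = ∞` when `cz+d = 0`,
`g∞ = a/c` if `c ≠ 0` and `g∞ = ∞` if `c = 0`. -/
noncomputable def mob (a b c d : ℂ) (z : OnePoint ℂ) : OnePoint ℂ :=
  Option.elim (show Option ℂ from z)
    (if c = 0 then OnePoint.infty else (((a / c : ℂ) : OnePoint ℂ)))
    (fun w => if c * w + d = 0 then OnePoint.infty
      else (((a * w + b) / (c * w + d) : ℂ) : OnePoint ℂ))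

/-- The circular arc `[1,+∞] = {x ∈ ℝ : x ≥ 1} ∪ {∞}` in the Riemann sphere. -/
def raySet : Set (OnePoint ℂ) :=
  {z | ∃ x : ℝ, 1 ≤ x ∧ z = ((x : ℂ) : OnePoint ℂ)} ∪ {OnePoint.infty}

/-- `V(g) = {g1, g∞} ∩ {1, ∞}`. -/
noncomputable def Vset (a b c d : ℂ) : Set (OnePoint ℂ) :=
  ({mob a b c d (((1 : ℂ) : OnePoint ℂ)), mob a b c d OnePoint.infty} : Set (OnePoint ℂ)) ∩
    ({((1 : ℂ) : OnePoint ℂ), OnePoint.infty} : Set (OnePoint ℂ))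

/-- `W_{1,ε} = {z ∈ ℂ : 0 < |z−1| < ε} ∪ {x ∈ ℝ : x > 1}`. -/
def Wset (ε : ℝ) : Set ℂ :=
  {z | 0 < ‖z - 1‖ ∧ ‖z - 1‖ < ε} ∪
    {z | ∃ x : ℝ, 1 < x ∧ z = (x : ℂ)}

/-! For finite nonzero `T`, `X` the quantity to bound is `X / ((cT + d)X - (aT + b))`, that is
`1 / (T φ(T, X))` with `φ(T, X) = c + d/T - a/X - b/(TX)` (`mobDefect`); in the chart `1/z` at
`∞`, `φ` is continuous on `(Ĉ ∖ {0})²`. On `[1,+∞]²` a zero of `φ` is a pair with `gT = X`, so by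
hypothesis it lies in `N`. The closures `K_ε` of `W_{1,ε}` in `Ĉ` (`thickRay ε`) are compact and
shrink to `[1,+∞]` as `ε → 0`; hence for small `ε` the function `φ` has no zero on the compact set
`K_ε² ∖ N`, and `1/φ` is bounded there. -/

open Filter Topology OnePoint

noncomputable def sphereInv (z : OnePoint ℂ) : ℂ := z.elim 0 (·⁻¹)

@[simp] lemma sphereInv_infty : sphereInv ∞ = 0 := rfl

@[simp] lemma sphereInv_coe (z : ℂ) : sphereInv z = z⁻¹ := rfl

lemma continuousAt_sphereInv {z : OnePoint ℂ} (hz : z ≠ ((0 : ℂ) : OnePoint ℂ)) :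
    ContinuousAt sphereInv z := by
  induction z using OnePoint.rec with
  | infty =>
    rw [continuousAt_infty', coclosedCompact_eq_cocompact, ← Metric.cobounded_eq_cocompact]
    exact tendsto_inv₀_cobounded
  | coe w =>
    rw [continuousAt_coe]
    exact continuousAt_inv₀ (by simpa using hz)

/-- `((cT + d)X - (aT + b)) / (TX)`, written in the chart `1/z` so that it extends
continuously to `T = ∞` and `X = ∞`. -/
noncomputable def mobDefect (a b c d : ℂ) (p : OnePoint ℂ × OnePoint ℂ) : ℂ :=
  c + d * sphereInv p.1 - a * sphereInv p.2 - b * sphereInv p.1 * sphereInv p.2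

lemma continuousAt_mobDefect (a b c d : ℂ) {p : OnePoint ℂ × OnePoint ℂ}
    (h₁ : p.1 ≠ ((0 : ℂ) : OnePoint ℂ)) (h₂ : p.2 ≠ ((0 : ℂ) : OnePoint ℂ)) :
    ContinuousAt (mobDefect a b c d) p := by
  have i₁ := (continuousAt_sphereInv h₁).comp continuousAt_fst
  have i₂ := (continuousAt_sphereInv h₂).comp continuousAt_snd
  exact ((continuousAt_const.add (continuousAt_const.mul i₁)).sub
    (continuousAt_const.mul i₂)).sub ((continuousAt_const.mul i₁).mul i₂)

lemma mobDefect_coe (a b c d : ℂ) {T X : ℂ} (hT : T ≠ 0) (hX : X ≠ 0) :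
    mobDefect a b c d (T, X) = ((c * T + d) * X - (a * T + b)) / (T * X) := by
  simp only [mobDefect, sphereInv_coe]
  field_simp
  ring

lemma mob_infty (a b c d : ℂ) : mob a b c d ∞ = if c = 0 then ∞ else ((a / c : ℂ) : OnePoint ℂ) :=
  rfl

lemma mob_coe (a b c d w : ℂ) : mob a b c d w =
    if c * w + d = 0 then ∞ else (((a * w + b) / (c * w + d) : ℂ) : OnePoint ℂ) :=
  rfl

lemma mob_eq_of_mobDefect_eq_zero {a b c d : ℂ} (hdet : a * d - b * c ≠ 0)
    {T X : OnePoint ℂ} (hT : T ≠ ((0 : ℂ) : OnePoint ℂ)) (hX : X ≠ ((0 : ℂ) : OnePoint ℂ))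
    (h : mobDefect a b c d (T, X) = 0) : mob a b c d T = X := by
  induction T using OnePoint.rec with
  | infty =>
    induction X using OnePoint.rec with
    | infty =>
      have hc : c = 0 := by simpa [mobDefect] using h
      rw [mob_infty, if_pos hc]
    | coe x =>
      have hx : x ≠ 0 := by simpa using hX
      have hcx : c * x = a := by
        simp only [mobDefect, sphereInv_infty, sphereInv_coe] at h
        field_simp at h
        linear_combination h
      have hc : c ≠ 0 := by
        rintro rfl
        exact hdet (by rw [← hcx]; ring)
      rw [mob_infty, if_neg hc, coe_eq_coe, div_eq_iff hc]
      linear_combination -hcx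
  | coe t =>
    have ht : t ≠ 0 := by simpa using hT
    induction X using OnePoint.rec with
    | infty =>
      have hct : c * t + d = 0 := by
        simp only [mobDefect, sphereInv_infty, sphereInv_coe] at h
        field_simp at h
        linear_combination h
      rw [mob_coe, if_pos hct]
    | coe x =>
      have hx : x ≠ 0 := by simpa using hX
      have hctx : (c * t + d) * x = a * t + b := by
        rw [mobDefect_coe a b c d ht hx, div_eq_zero_iff] at h
        exact sub_eq_zero.1 (h.resolve_right (mul_ne_zero ht hx))
      have hct : c * t + d ≠ 0 := by
        intro hct
        rw [hct, zero_mul] at hctx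
        exact hdet (by linear_combination a * hct - c * hctx.symm)
      rw [mob_coe, if_neg hct, coe_eq_coe, div_eq_iff hct, ← hctx, mul_comm]

lemma mob_inv_mob {a b c d : ℂ} (hdet : a * d - b * c ≠ 0) (z : OnePoint ℂ) :
    mob d (-b) (-c) a (mob a b c d z) = z := by
  induction z using OnePoint.rec with
  | infty =>
    by_cases hc : c = 0
    · rw [mob_infty, if_pos hc, mob_infty, if_pos (neg_eq_zero.2 hc)]
    · rw [mob_infty, if_neg hc, mob_coe, if_pos (by field_simp; ring)]
  | coe t =>
    rcases eq_or_ne (c * t + d) 0 with hct | hct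
    · have hc : c ≠ 0 := by
        rintro rfl
        exact hdet (by linear_combination a * hct)
      rw [mob_coe, if_pos hct, mob_infty, if_neg (neg_ne_zero.2 hc), coe_eq_coe,
        div_eq_iff (neg_ne_zero.2 hc)]
      linear_combination hct
    · have hden : -c * ((a * t + b) / (c * t + d)) + a = (a * d - b * c) / (c * t + d) := by
        field_simp
        ring
      rw [mob_coe, if_neg hct, mob_coe, hden, if_neg (div_ne_zero hdet hct), coe_eq_coe,
        div_eq_iff (div_ne_zero hdet hct), mul_div_assoc', mul_div_assoc', div_add' _ _ _ hct,
        div_left_inj' hct]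
      ring

def thickRay (ε : ℝ) : Set (OnePoint ℂ) :=
  insert ∞ ((↑) '' (Metric.closedBall 1 ε ∪ Complex.ofReal '' Ici 1))

lemma isClosed_thickRay (ε : ℝ) : IsClosed (thickRay ε) := by
  rw [thickRay, isClosed_iff_of_mem (mem_insert _ _), insert_eq, preimage_union,
    coe_preimage_infty, empty_union, preimage_image_eq _ coe_injective]
  exact Metric.isClosed_closedBall.union
    (Complex.isometry_ofReal.isClosedEmbedding.isClosedMap _ isClosed_Ici)

lemma thickRay_mono : Monotone thickRay := fun _ _ h =>
  insert_subset_insert <| image_mono <|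
    union_subset_union_left _ (Metric.closedBall_subset_closedBall h)

lemma raySet_subset_thickRay (ε : ℝ) : raySet ⊆ thickRay ε := by
  rintro _ (⟨x, hx, rfl⟩ | rfl)
  · exact mem_insert_of_mem _ ⟨x, Or.inr ⟨x, hx, rfl⟩, rfl⟩
  · exact mem_insert _ _

lemma coe_mem_thickRay_of_mem_Wset {ε : ℝ} {z : ℂ} (hz : z ∈ Wset ε) :
    (z : OnePoint ℂ) ∈ thickRay ε := by
  refine mem_insert_of_mem _ ⟨z, ?_, rfl⟩
  rcases hz with ⟨-, hz⟩ | ⟨x, hx, rfl⟩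
  · exact Or.inl (by rw [Metric.mem_closedBall, dist_eq_norm]; exact hz.le)
  · exact Or.inr ⟨x, hx.le, rfl⟩

lemma ne_zero_of_mem_thickRay {ε : ℝ} (hε : ε < 1) {z : OnePoint ℂ} (hz : z ∈ thickRay ε) :
    z ≠ ((0 : ℂ) : OnePoint ℂ) := by
  rintro rfl
  obtain ⟨w, hw, hw0⟩ := (mem_insert_iff.1 hz).resolve_left (coe_ne_infty 0)
  rw [coe_eq_coe] at hw0
  subst hw0
  rcases hw with hw | ⟨x, hx, hx0⟩
  · rw [Metric.mem_closedBall, dist_comm, dist_zero_right, norm_one] at hw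
    linarith
  · simp only [Complex.ofReal_eq_zero] at hx0
    linarith [mem_Ici.1 hx]

lemma ne_zero_of_mem_raySet {z : OnePoint ℂ} (hz : z ∈ raySet) : z ≠ ((0 : ℂ) : OnePoint ℂ) :=
  ne_zero_of_mem_thickRay zero_lt_one (raySet_subset_thickRay 0 hz)

lemma iInter_thickRay_subset_raySet : ⋂ n : ℕ, thickRay (1 / ((n : ℝ) + 2)) ⊆ raySet := by
  intro z hz
  induction z using OnePoint.rec with
  | infty => exact Or.inr rfl
  | coe w =>
    have hw (n : ℕ) : w ∈ Metric.closedBall 1 (1 / ((n : ℝ) + 2)) ∪ Complex.ofReal '' Ici 1 := by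
      simpa [thickRay] using mem_iInter.1 hz n
    by_cases hray : w ∈ Complex.ofReal '' Ici 1
    · obtain ⟨x, hx, rfl⟩ := hray
      exact Or.inl ⟨x, hx, rfl⟩
    · obtain rfl : w = 1 := by
        by_contra hne
        obtain ⟨n, hn⟩ := exists_nat_one_div_lt (dist_pos.2 hne)
        have hball := Metric.mem_closedBall.1 ((hw n).resolve_right hray)
        have : 1 / ((n : ℝ) + 2) ≤ 1 / ((n : ℝ) + 1) :=
          one_div_le_one_div_of_le (by positivity) (by linarith)
        linarith
      exact Or.inl ⟨1, le_rfl, by simp⟩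

lemma exists_thickRay_prod_inter_compl_subset {N U : Set (OnePoint ℂ × OnePoint ℂ)}
    (hN : IsOpen N) (hU : ∀ p ∈ raySet ×ˢ raySet, p ∉ N → U ∈ 𝓝 p) :
    ∃ ε ∈ Ioo (0 : ℝ) 1, thickRay ε ×ˢ thickRay ε ∩ Nᶜ ⊆ U := by
  set ε : ℕ → ℝ := fun n => 1 / ((n : ℝ) + 2)
  set K : ℕ → Set (OnePoint ℂ × OnePoint ℂ) := fun n => thickRay (ε n) ×ˢ thickRay (ε n) ∩ Nᶜ
  have hK : ∀ n, IsClosed (K n) := fun n =>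
    ((isClosed_thickRay _).prod (isClosed_thickRay _)).inter hN.isClosed_compl
  have hK_anti : Antitone K := by
    intro m n hmn
    have : ε n ≤ ε m := one_div_le_one_div_of_le (by positivity) (by gcongr)
    exact inter_subset_inter_left _ (prod_mono (thickRay_mono this) (thickRay_mono this))
  obtain ⟨n, hn⟩ := exists_subset_nhds_of_isCompact' hK_anti.directed_ge
    (fun n => (hK n).isCompact) hK (U := U) fun p hp => by
      simp only [K, mem_iInter] at hp
      exact hU p ⟨iInter_thickRay_subset_raySet (mem_iInter.2 fun n => (hp n).1.1),
        iInter_thickRay_subset_raySet (mem_iInter.2 fun n => (hp n).1.2)⟩ (hp 0).2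
  have hε_lt_one : ε n < 1 := by
    rw [div_lt_one (by positivity)]
    linarith [n.cast_nonneg (α := ℝ)]
  exact ⟨ε n, ⟨by positivity, hε_lt_one⟩, hn⟩

lemma mobDefect_ne_zero_of_mem_raySet {a b c d : ℂ} (hdet : a * d - b * c ≠ 0)
    (hC : mob a b c d '' raySet ∩ raySet ⊆ Vset a b c d) {N : Set (OnePoint ℂ × OnePoint ℂ)}
    (hNmem : ∀ X₀ ∈ Vset a b c d, (mob d (-b) (-c) a X₀, X₀) ∈ N)
    {p : OnePoint ℂ × OnePoint ℂ} (hp : p ∈ raySet ×ˢ raySet) (hpN : p ∉ N) :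
    mobDefect a b c d p ≠ 0 := by
  intro h
  have hmob := mob_eq_of_mobDefect_eq_zero hdet (ne_zero_of_mem_raySet hp.1)
    (ne_zero_of_mem_raySet hp.2) h
  have hpN' := hNmem p.2 (hC ⟨⟨p.1, hp.1, hmob⟩, hp.2⟩)
  rw [← hmob, mob_inv_mob hdet, hmob] at hpN'
  exact hpN hpN'

lemma one_div_mul_one_div_one_sub_div_eq {a b c d T X : ℂ} (hT : T ≠ 0) (hX : X ≠ 0)
    (hden : c * T + d ≠ 0) (hne : (a * T + b) / (c * T + d) ≠ X) :
    (1 / (c * T + d)) * (1 / (1 - ((a * T + b) / (c * T + d)) / X)) =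
      (mobDefect a b c d (T, X))⁻¹ / T := by
  have hD : (c * T + d) * X - (a * T + b) ≠ 0 := by
    rwa [sub_ne_zero, ne_comm, mul_comm (c * T + d), Ne, ← div_eq_iff hden]
  rw [mobDefect_coe a b c d hT hX]
  field_simp

theorem stmt9 (a b c d : ℂ) (hdet : a * d - b * c ≠ 0)
    (hC : mob a b c d '' raySet ∩ raySet ⊆ Vset a b c d)
    (N : Set (OnePoint ℂ × OnePoint ℂ)) (hN : IsOpen N)
    (hNmem : ∀ X₀ ∈ Vset a b c d, (mob d (-b) (-c) a X₀, X₀) ∈ N) :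
    ∃ ε > (0 : ℝ), ∃ M > (0 : ℝ), ∀ T X : ℂ, T ∈ Wset ε → X ∈ Wset ε →
      ((T : OnePoint ℂ), (X : OnePoint ℂ)) ∉ N →
      c * T + d ≠ 0 → (a * T + b) / (c * T + d) ≠ X →
      ‖(1 / (c * T + d)) * (1 / (1 - ((a * T + b) / (c * T + d)) / X))‖
        ≤ M / ‖T‖ := by
  obtain ⟨ε, ⟨hε₀, hε₁⟩, hsub⟩ := exists_thickRay_prod_inter_compl_subset hN
    (U := {p | mobDefect a b c d p ≠ 0}) fun p hp hpN =>
      (continuousAt_mobDefect a b c d (ne_zero_of_mem_raySet hp.1)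
        (ne_zero_of_mem_raySet hp.2)).eventually_ne
        (mobDefect_ne_zero_of_mem_raySet hdet hC hNmem hp hpN)
  set K := thickRay ε ×ˢ thickRay ε ∩ Nᶜ
  have hK : IsCompact K :=
    (((isClosed_thickRay ε).prod (isClosed_thickRay ε)).inter hN.isClosed_compl).isCompact
  obtain ⟨M, hM⟩ := hK.exists_bound_of_continuousOn (f := fun p => (mobDefect a b c d p)⁻¹)
    fun p hp => ((continuousAt_mobDefect a b c d (ne_zero_of_mem_thickRay hε₁ hp.1.1)
      (ne_zero_of_mem_thickRay hε₁ hp.1.2)).inv₀ (hsub hp)).continuousWithinAt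
  refine ⟨ε, hε₀, max M 1, by positivity, fun T X hT hX hTX hden hne => ?_⟩
  have hT' := coe_mem_thickRay_of_mem_Wset hT
  have hX' := coe_mem_thickRay_of_mem_Wset hX
  have hT0 : T ≠ 0 := by simpa using ne_zero_of_mem_thickRay hε₁ hT'
  have hX0 : X ≠ 0 := by simpa using ne_zero_of_mem_thickRay hε₁ hX'
  rw [one_div_mul_one_div_one_sub_div_eq hT0 hX0 hden hne, norm_div]
  gcongr
  exact (hM _ ⟨⟨hT', hX'⟩, hTX⟩).trans (le_max_left _ _)
end

section
/- Let g = [[a,b],[c,d]] ∈ GL₂(ℂ) and let T, X ∈ ℂ ∖ {0} satisfy j_D(g,T) ≠ 0, j_N(g,T) ≠ 0, j_D(g^{−1},X) ≠ 0, j_N(g^{−1},X) ≠ 0 and gT ≠ X. Set F_D = 1/(1 − (gT)/X), G_D = 1/(1 − (g^{−1}X)/T), F_N = ((gT)/X)/(1 − (gT)/X) and G_N = ((g^{−1}X)/T)/(1 − (g^{−1}X)/T). Then the following three identities hold: (T/j_D(g,T))·F_D = −(1/det g)·(X/j_D(g^{−1},X))·G_D; (1/j_N(g,T))·F_N = −(1/det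 g)·(1/j_N(g^{−1},X))·G_N; and (1/j_D(g,T))·F_D = −(1/det g)·(X/j_N(g^{−1},X))·G_N. -/
/-- `j_D(g,z) = cz + d` for `g = [[a,b],[c,d]]`. -/
def jD (g : Matrix (Fin 2) (Fin 2) ℂ) (z : ℂ) : ℂ := g 1 0 * z + g 1 1

/-- `j_N(g,z) = az + b` for `g = [[a,b],[c,d]]`. -/
def jN (g : Matrix (Fin 2) (Fin 2) ℂ) (z : ℂ) : ℂ := g 0 0 * z + g 0 1

/-- The Möbius action `gz = (az+b)/(cz+d)`. -/
noncomputable def act (g : Matrix (Fin 2) (Fin 2) ℂ) (z : ℂ) : ℂ := jN g z / jD g z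

/-
Since `w − g z = (w · jD(g,z) − jN(g,z)) / jD(g,z)`, each of `F_D`, `F_N` (resp. `G_D`, `G_N`) is
an automorphy factor divided by `X · jD(g,T) − jN(g,T)` (resp. `T · jD(g⁻¹,X) − jN(g⁻¹,X)`).
Writing `g⁻¹ = adj g / det g` shows that the second of these is `−1 / det g` times the first,
and the identities follow by cancelling the remaining automorphy factors.
-/

lemma Matrix.det_smul_inv_eq_adjugate {n K : Type*} [Fintype n] [DecidableEq n] [Field K]
    {A : Matrix n n K} (hdet : A.det ≠ 0) : A.det • A⁻¹ = A.adjugate := by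
  rw [Matrix.inv_def, Ring.inverse_eq_inv', smul_smul, mul_inv_cancel₀ hdet, one_smul]

lemma one_div_one_sub_div {K : Type*} [Field K] {w : K} (hw : w ≠ 0) (u : K) :
    1 / (1 - u / w) = w / (w - u) := by
  rw [one_sub_div hw, one_div_div]

lemma div_div_one_sub_div {K : Type*} [Field K] {w : K} (hw : w ≠ 0) (u : K) :
    u / w / (1 - u / w) = u / (w - u) := by
  rw [one_sub_div hw, div_div_div_cancel_right₀ hw]

lemma det_mul_jD_inv {g : Matrix (Fin 2) (Fin 2) ℂ} (hdet : g.det ≠ 0) (z : ℂ) :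
    g.det * jD g⁻¹ z = g 0 0 - g 1 0 * z := by
  have hc := congrFun (congrFun (Matrix.det_smul_inv_eq_adjugate hdet) 1) 0
  have hd := congrFun (congrFun (Matrix.det_smul_inv_eq_adjugate hdet) 1) 1
  simp only [Matrix.smul_apply, smul_eq_mul, Matrix.adjugate_fin_two, Matrix.of_apply,
    Matrix.cons_val_zero, Matrix.cons_val_one] at hc hd
  rw [jD]
  linear_combination z * hc + hd

lemma det_mul_jN_inv {g : Matrix (Fin 2) (Fin 2) ℂ} (hdet : g.det ≠ 0) (z : ℂ) :
    g.det * jN g⁻¹ z = g 1 1 * z - g 0 1 := by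
  have ha := congrFun (congrFun (Matrix.det_smul_inv_eq_adjugate hdet) 0) 0
  have hb := congrFun (congrFun (Matrix.det_smul_inv_eq_adjugate hdet) 0) 1
  simp only [Matrix.smul_apply, smul_eq_mul, Matrix.adjugate_fin_two, Matrix.of_apply,
    Matrix.cons_val_zero, Matrix.cons_val_one] at ha hb
  rw [jN]
  linear_combination z * ha + hb

lemma mul_jD_inv_sub_jN_inv {g : Matrix (Fin 2) (Fin 2) ℂ} (hdet : g.det ≠ 0) (z w : ℂ) :
    w * jD g⁻¹ z - jN g⁻¹ z = -(z * jD g w - jN g w) / g.det := by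
  rw [eq_div_iff hdet]
  have hD := det_mul_jD_inv hdet z
  have hN := det_mul_jN_inv hdet z
  unfold jD jN at *
  linear_combination w * hD - hN

lemma sub_act {g : Matrix (Fin 2) (Fin 2) ℂ} {z : ℂ} (hz : jD g z ≠ 0) (w : ℂ) :
    w - act g z = (w * jD g z - jN g z) / jD g z := by
  rw [act]; field_simp

lemma one_div_one_sub_act_div {g : Matrix (Fin 2) (Fin 2) ℂ} {z w : ℂ} (hz : jD g z ≠ 0)
    (hw : w ≠ 0) : 1 / (1 - act g z / w) = w * jD g z / (w * jD g z - jN g z) := by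
  rw [one_div_one_sub_div hw, sub_act hz, div_div_eq_mul_div]

lemma act_div_div_one_sub_act_div {g : Matrix (Fin 2) (Fin 2) ℂ} {z w : ℂ} (hz : jD g z ≠ 0)
    (hw : w ≠ 0) : act g z / w / (1 - act g z / w) = jN g z / (w * jD g z - jN g z) := by
  rw [div_div_one_sub_div hw, sub_act hz, act, div_div_div_cancel_right₀ hz]

theorem stmt10_general (g : Matrix (Fin 2) (Fin 2) ℂ) (hdet : g.det ≠ 0) (T X : ℂ)
    (hT : T ≠ 0) (hX : X ≠ 0)
    (h1 : jD g T ≠ 0) (h2 : jN g T ≠ 0) (h3 : jD g⁻¹ X ≠ 0) (h4 : jN g⁻¹ X ≠ 0) :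
    (T / jD g T) * (1 / (1 - act g T / X)) =
        -(1 / g.det) * ((X / jD g⁻¹ X) * (1 / (1 - act g⁻¹ X / T))) ∧
      (1 / jN g T) * ((act g T / X) / (1 - act g T / X)) =
        -(1 / g.det) * ((1 / jN g⁻¹ X) * ((act g⁻¹ X / T) / (1 - act g⁻¹ X / T))) ∧
      (1 / jD g T) * (1 / (1 - act g T / X)) =
        -(1 / g.det) * ((X / jN g⁻¹ X) * ((act g⁻¹ X / T) / (1 - act g⁻¹ X / T))) := by
  rw [one_div_one_sub_act_div h1 hX, one_div_one_sub_act_div h3 hT,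
    act_div_div_one_sub_act_div h1 hX, act_div_div_one_sub_act_div h3 hT,
    mul_jD_inv_sub_jN_inv hdet X T]
  refine ⟨?_, ?_, ?_⟩ <;> field_simp

theorem stmt10 (g : Matrix (Fin 2) (Fin 2) ℂ) (hdet : g.det ≠ 0) (T X : ℂ)
    (hT : T ≠ 0) (hX : X ≠ 0)
    (h1 : jD g T ≠ 0) (h2 : jN g T ≠ 0) (h3 : jD g⁻¹ X ≠ 0) (h4 : jN g⁻¹ X ≠ 0)
    (h5 : act g T ≠ X) :
    (T / jD g T) * (1 / (1 - act g T / X)) =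
        -(1 / g.det) * ((X / jD g⁻¹ X) * (1 / (1 - act g⁻¹ X / T))) ∧
      (1 / jN g T) * ((act g T / X) / (1 - act g T / X)) =
        -(1 / g.det) * ((1 / jN g⁻¹ X) * ((act g⁻¹ X / T) / (1 - act g⁻¹ X / T))) ∧
      (1 / jD g T) * (1 / (1 - act g T / X)) =
        -(1 / g.det) * ((X / jN g⁻¹ X) * ((act g⁻¹ X / T) / (1 - act g⁻¹ X / T))) :=
  stmt10_general g hdet T X hT hX h1 h2 h3 h4
end
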